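/- There exists a constant ζ ∈ (0,1) such that for every positive integer d: vol({x ∈ M_d(ℂ) : x* = −x and ‖x‖ ≤ 1}) ≥ ζ^{d²} · Θ_d, where Θ_d is the volume of the Euclidean ball of radius √d in d²-dimensional real Euclidean space. -/

import Mathlib

/-!
Weight Lebesgue measure on `ℝ^{d²}` by the Gaussian density `exp (-b ‖x‖²)`, `b = 32 d`. Since
the Hilbert–Schmidt norm dominates the operator norm, each functional `x ↦ Re ⟨z, e(x) y⟩` with
unit vectors `y, z ∈ ℂ^d` has norm at most one, so by a Chernoff bound the half-space where it
exceeds `9/16` carries at most a fraction `exp (-81 b / 256)` of the Gaussian mass. A `1/4`-net of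
the unit sphere of `ℂ^d` has at most `9^{2d}` points, and if `Re ⟨z, T y⟩ ≤ 9/16` for all `y, z`
in the net then `‖T‖ ≤ 1`. Hence the complement of the operator-norm ball `K` is covered by
`81^{2d}` such half-spaces and `K` carries at least half of the Gaussian mass. On the ball of
radius `√d` the density is at least `exp (-b d)`, which gives `vol (ball) ≤ 2 exp (32 d²) vol K`,
that is, the claim with `ζ = exp (-33)`.
-/

open MeasureTheory

/-- The operator norm on `M_d(ℂ)` (acting on Euclidean space). -/
noncomputable def opN {d : ℕ} (x : Matrix (Fin d) (Fin d) ℂ) : ℝ :=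
  ‖Matrix.toEuclideanCLM (𝕜 := ℂ) x‖

open Real Metric Module Set
open scoped RealInnerProductSpace NNReal ENNReal

section Gaussian

variable {V : Type*} [NormedAddCommGroup V] [InnerProductSpace ℝ V]

lemma ofReal_exp_neg_mul_sq_norm_add_inner (b : ℝ) (w x : V) :
    ((exp (-b * ‖x‖ ^ 2 + ⟪w, x⟫) : ℝ) : ℂ) =
      Complex.exp (-(b : ℂ) * (‖x‖ : ℂ) ^ 2 + 1 * (⟪w, x⟫ : ℂ)) := by
  push_cast; ring_nf

variable [FiniteDimensional ℝ V] [MeasurableSpace V] [BorelSpace V]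

noncomputable def gaussVolume (b : ℝ) : Measure V :=
  volume.withDensity fun x => ENNReal.ofReal (exp (-b * ‖x‖ ^ 2))

lemma integrable_exp_neg_mul_sq_norm_add_inner {b : ℝ} (hb : 0 < b) (w : V) :
    Integrable fun x : V => exp (-b * ‖x‖ ^ 2 + ⟪w, x⟫) := by
  have h := (GaussianFourier.integrable_cexp_neg_mul_sq_norm_add (b := (b : ℂ))
    (by simpa using hb) 1 w).re
  simpa only [← ofReal_exp_neg_mul_sq_norm_add_inner, RCLike.re_to_complex,
    Complex.ofReal_re] using h

lemma integral_exp_neg_mul_sq_norm_add_inner {b : ℝ} (hb : 0 < b) (w : V) :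
    ∫ x : V, exp (-b * ‖x‖ ^ 2 + ⟪w, x⟫) =
      (π / b) ^ (finrank ℝ V / 2 : ℝ) * exp (‖w‖ ^ 2 / (4 * b)) := by
  have h := GaussianFourier.integral_cexp_neg_mul_sq_norm_add (b := (b : ℂ))
    (by simpa using hb) 1 w
  rw [← integral_congr_ae (ae_of_all _ fun x => ofReal_exp_neg_mul_sq_norm_add_inner b w x)] at h
  apply Complex.ofReal_injective
  rw [← integral_complex_ofReal, h, Complex.ofReal_mul, Complex.ofReal_cpow (by positivity),
    Complex.ofReal_exp]
  push_cast
  ring_nf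

lemma lintegral_exp_neg_mul_sq_norm_add_inner {b : ℝ} (hb : 0 < b) (w : V) :
    ∫⁻ x : V, ENNReal.ofReal (exp (-b * ‖x‖ ^ 2 + ⟪w, x⟫)) =
      ENNReal.ofReal ((π / b) ^ (finrank ℝ V / 2 : ℝ) * exp (‖w‖ ^ 2 / (4 * b))) := by
  rw [← integral_exp_neg_mul_sq_norm_add_inner hb,
    ofReal_integral_eq_lintegral_ofReal (integrable_exp_neg_mul_sq_norm_add_inner hb w)
      (ae_of_all _ fun _ => (exp_pos _).le)]

lemma gaussVolume_univ {b : ℝ} (hb : 0 < b) :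
    gaussVolume b (univ : Set V) = ENNReal.ofReal ((π / b) ^ (finrank ℝ V / 2 : ℝ)) := by
  simpa [gaussVolume] using lintegral_exp_neg_mul_sq_norm_add_inner hb (0 : V)

lemma gaussVolume_le_volume {b : ℝ} (hb : 0 ≤ b) (s : Set V) : gaussVolume b s ≤ volume s := by
  rw [gaussVolume, withDensity_apply' _ s, ← setLIntegral_one]
  refine lintegral_mono fun x => ENNReal.ofReal_le_one.2 (exp_le_one_iff.2 ?_)
  nlinarith [sq_nonneg ‖x‖]

lemma volume_ball_le_exp_mul_gaussVolume {b : ℝ} (hb : 0 ≤ b) (R : ℝ) :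
    volume (ball (0 : V) R) ≤
      ENNReal.ofReal (exp (b * R ^ 2)) * gaussVolume b (univ : Set V) := by
  calc volume (ball (0 : V) R)
      = ENNReal.ofReal (exp (b * R ^ 2)) *
          ∫⁻ _ in ball (0 : V) R, ENNReal.ofReal (exp (-b * R ^ 2)) := by
        rw [setLIntegral_const, ← mul_assoc, ← ENNReal.ofReal_mul (exp_pos _).le, ← exp_add]
        simp
    _ ≤ ENNReal.ofReal (exp (b * R ^ 2)) * gaussVolume b (ball (0 : V) R) := by
        rw [gaussVolume, withDensity_apply _ measurableSet_ball]
        refine mul_le_mul_right (setLIntegral_mono' measurableSet_ball fun x hx => ?_) _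
        have hxR : ‖x‖ < R := by simpa using hx
        have hsq : ‖x‖ ^ 2 ≤ R ^ 2 := pow_le_pow_left₀ (norm_nonneg x) hxR.le 2
        exact ENNReal.ofReal_le_ofReal (exp_le_exp.2 (by nlinarith))
    _ ≤ _ := by gcongr; exact subset_univ _

lemma gaussVolume_setOf_lt_le {b : ℝ} (hb : 0 < b) (f : StrongDual ℝ V) (hf : ‖f‖ ≤ 1) {s : ℝ}
    (hs : 0 ≤ s) :
    gaussVolume b {x | s < f x} ≤
      ENNReal.ofReal (exp (-b * s ^ 2)) * gaussVolume b (univ : Set V) := by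
  set w := (InnerProductSpace.toDual ℝ V).symm f
  have hw : ‖w‖ ≤ 1 := by simpa [w] using hf
  -- Chernoff bound with the optimal parameter `t = 2 b s`
  set t := 2 * b * s
  have hS : MeasurableSet {x | s < f x} := measurableSet_lt measurable_const f.continuous.measurable
  have hnorm : ‖t • w‖ ^ 2 / (4 * b) ≤ b * s ^ 2 := by
    rw [div_le_iff₀ (by positivity), norm_smul, Real.norm_of_nonneg (by positivity)]
    have : ‖w‖ ^ 2 ≤ 1 := pow_le_one₀ (norm_nonneg w) hw
    nlinarith [sq_nonneg t]
  calc gaussVolume b {x | s < f x}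
      = ∫⁻ x in {x | s < f x}, ENNReal.ofReal (exp (-b * ‖x‖ ^ 2)) := withDensity_apply _ hS
    _ ≤ ∫⁻ x in {x | s < f x}, ENNReal.ofReal (exp (-t * s)) *
          ENNReal.ofReal (exp (-b * ‖x‖ ^ 2 + ⟪t • w, x⟫)) := by
        refine setLIntegral_mono' hS fun x hx => ?_
        have hx : s < ⟪w, x⟫ := by simpa [w, InnerProductSpace.toDual_symm_apply] using hx
        rw [← ENNReal.ofReal_mul (exp_pos _).le, ← exp_add, inner_smul_left]
        refine ENNReal.ofReal_le_ofReal (exp_le_exp.2 ?_)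
        simp only [conj_trivial]
        nlinarith [mul_nonneg (by positivity : (0:ℝ) ≤ t) (sub_nonneg.2 hx.le)]
    _ ≤ ENNReal.ofReal (exp (-t * s)) *
          ∫⁻ x, ENNReal.ofReal (exp (-b * ‖x‖ ^ 2 + ⟪t • w, x⟫)) := by
        rw [← lintegral_const_mul' _ _ ENNReal.ofReal_ne_top]
        exact setLIntegral_le_lintegral _ _
    _ ≤ ENNReal.ofReal (exp (-b * s ^ 2)) * gaussVolume b (univ : Set V) := by
        rw [lintegral_exp_neg_mul_sq_norm_add_inner hb, gaussVolume_univ hb,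
          ← ENNReal.ofReal_mul (exp_pos _).le, ← ENNReal.ofReal_mul (exp_pos _).le]
        refine ENNReal.ofReal_le_ofReal ?_
        rw [mul_left_comm, mul_comm (exp (-b * s ^ 2)), ← exp_add]
        have hts : t * s = 2 * (b * s ^ 2) := by ring
        gcongr
        linarith

end Gaussian

section Net

variable {E : Type*} [NormedAddCommGroup E] [NormedSpace ℝ E] [FiniteDimensional ℝ E]

lemma card_le_of_isSeparated_of_subset_closedBall {N : Finset E}
    (hN : ↑N ⊆ closedBall (0 : E) 1) {ε : ℝ≥0} (hε : 0 < ε) (hsep : IsSeparated ε (N : Set E)) :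
    (N.card : ℝ) ≤ (1 + 2 / ε) ^ finrank ℝ E := by
  rcases subsingleton_or_nontrivial E with hE | hE
  · rw [finrank_zero_of_subsingleton, pow_zero]
    exact_mod_cast Finset.card_le_one_of_subsingleton N
  borelize E
  set μ : Measure E := Measure.addHaar
  set n := finrank ℝ E
  set r : ℝ := ε / 2 with hr
  have hr0 : 0 < r := by positivity
  have hdisj : (N : Set E).PairwiseDisjoint fun y => ball y r := by
    intro y hy y' hy' hne
    refine ball_disjoint_ball ?_
    have : (ε : ℝ≥0∞) < edist y y' := hsep hy hy' hne
    rw [edist_nndist, ENNReal.coe_lt_coe, ← NNReal.coe_lt_coe, coe_nndist] at this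
    linarith
  have hsub : (⋃ y ∈ N, ball y r) ⊆ ball (0 : E) (1 + r) := by
    refine iUnion₂_subset fun y hy => ball_subset_ball' ?_
    have := hN hy
    rw [mem_closedBall, dist_zero_right] at this
    rw [dist_zero_right]; linarith
  have hunit : μ (ball 0 1) ≠ 0 := (measure_ball_pos μ 0 one_pos).ne'
  have hunit' : μ (ball 0 1) ≠ ⊤ := measure_ball_lt_top.ne
  have key : ENNReal.ofReal (N.card * r ^ n) * μ (ball 0 1) ≤
      ENNReal.ofReal ((1 + r) ^ n) * μ (ball 0 1) := by
    calc ENNReal.ofReal (N.card * r ^ n) * μ (ball 0 1) = ∑ y ∈ N, μ (ball y r) := by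
          simp_rw [Measure.addHaar_ball μ _ hr0.le]
          rw [Finset.sum_const, nsmul_eq_mul, ENNReal.ofReal_mul (by positivity), mul_assoc,
            ENNReal.ofReal_natCast]
      _ = μ (⋃ y ∈ N, ball y r) :=
          (measure_biUnion_finset hdisj fun _ _ => measurableSet_ball).symm
      _ ≤ μ (ball 0 (1 + r)) := measure_mono hsub
      _ = ENNReal.ofReal ((1 + r) ^ n) * μ (ball 0 1) := Measure.addHaar_ball μ _ (by positivity)
  have key' : (N.card : ℝ) * r ^ n ≤ (1 + r) ^ n :=
    (ENNReal.ofReal_le_ofReal_iff (by positivity)).1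
      ((ENNReal.mul_le_mul_iff_left hunit hunit').1 key)
  have h9 : 1 + 2 / (ε : ℝ) = (1 + r) / r := by rw [hr]; field_simp; ring
  rw [h9, div_pow, le_div_iff₀ (by positivity)]
  exact key'

lemma exists_finset_isCover_of_subset_closedBall {A : Set E} (hA : A ⊆ closedBall (0 : E) 1)
    {ε : ℝ≥0} (hε : 0 < ε) :
    ∃ N : Finset E, (N.card : ℝ) ≤ (1 + 2 / ε) ^ finrank ℝ E ∧ ↑N ⊆ A ∧ IsCover ε A N := by
  set B := ⌊(1 + 2 / (ε : ℝ)) ^ finrank ℝ E⌋₊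
  have hbound : ∀ C ⊆ A, IsSeparated ε C → C.encard ≤ B := by
    intro C hCA hsep
    by_contra! hC
    obtain ⟨t, htC, htcard⟩ := exists_subset_encard_eq (k := ((B + 1 : ℕ) : ℕ∞))
      (by push_cast; exact Order.add_one_le_of_lt hC)
    have htfin : t.Finite := finite_of_encard_eq_coe htcard
    have := card_le_of_isSeparated_of_subset_closedBall (N := htfin.toFinset)
      (by simpa using htC.trans (hCA.trans hA)) hε (by simpa using hsep.subset htC)
    rw [← ncard_eq_toFinset_card t htfin, ncard_def, htcard, ENat.toNat_natCast] at this
    have := Nat.lt_floor_add_one ((1 + 2 / (ε : ℝ)) ^ finrank ℝ E)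
    push_cast at *
    linarith
  have hP : packingNumber ε A ≠ ⊤ :=
    ne_top_of_le_ne_top (ENat.natCast_ne_top B) (iSup₂_le fun C hCA => iSup_le (hbound C hCA))
  have hfin : (maximalSeparatedSet ε A).Finite :=
    finite_of_encard_eq_coe ((encard_maximalSeparatedSet hP).trans (ENat.natCast_toNat hP).symm)
  refine ⟨hfin.toFinset, ?_, by simpa using maximalSeparatedSet_subset, by
    simpa using isCover_maximalSeparatedSet hP⟩
  exact card_le_of_isSeparated_of_subset_closedBall
    (by simpa using maximalSeparatedSet_subset.trans hA) hε
    (by simpa using isSeparated_maximalSeparatedSet)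

end Net

section OpNorm

lemma Metric.IsCover.exists_norm_sub_le {E : Type*} [SeminormedAddCommGroup E] {ε : ℝ≥0}
    {s N : Set E} (hN : IsCover ε s N) {x : E} (hx : x ∈ s) : ∃ y ∈ N, ‖x - y‖ ≤ ε := by
  obtain ⟨y, hy, hxy⟩ := mem_iUnion₂.1 (isCover_iff_subset_iUnion_closedBall.1 hN hx)
  exact ⟨y, hy, by rwa [mem_closedBall, dist_eq_norm] at hxy⟩

variable {E F : Type*} [NormedAddCommGroup E] [NormedSpace ℝ E]

lemma ContinuousLinearMap.opNorm_le_of_isCover_sphere [NormedAddCommGroup F] [NormedSpace ℝ F]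
    (T : E →L[ℝ] F) {ε : ℝ≥0} {N : Set E} (hN : IsCover ε (sphere 0 1) N) {t : ℝ} (ht : 0 ≤ t)
    (hT : ∀ y ∈ N, ‖T y‖ ≤ t) : (1 - ε) * ‖T‖ ≤ t := by
  have : ‖T‖ ≤ t + ε * ‖T‖ := by
    refine T.opNorm_le_of_unit_norm (by positivity) fun u hu => ?_
    obtain ⟨y, hy, huy⟩ := hN.exists_norm_sub_le (mem_sphere_zero_iff_norm.2 hu)
    calc ‖T u‖ = ‖T y + T (u - y)‖ := by rw [map_sub, add_sub_cancel]
      _ ≤ ‖T y‖ + ‖T‖ * ‖u - y‖ := norm_add_le_of_le le_rfl (T.le_opNorm _)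
      _ ≤ t + ε * ‖T‖ := by rw [mul_comm]; gcongr; exact hT y hy
  linarith

variable [NormedAddCommGroup F] [InnerProductSpace ℝ F]

lemma norm_le_of_isCover_sphere {ε : ℝ≥0} {N : Set F} (hN : IsCover ε (sphere 0 1) N) {t : ℝ}
    (ht : 0 ≤ t) {v : F} (hv : ∀ z ∈ N, ⟪z, v⟫ ≤ t) : (1 - ε) * ‖v‖ ≤ t := by
  rcases eq_or_ne v 0 with rfl | hv0
  · simpa using ht
  set u := ‖v‖⁻¹ • v
  have hu : ‖u‖ = 1 := norm_smul_inv_norm hv0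
  obtain ⟨z, hz, huz⟩ := hN.exists_norm_sub_le (mem_sphere_zero_iff_norm.2 hu)
  have huv : ⟪u, v⟫ = ‖v‖ := by
    rw [real_inner_smul_left, real_inner_self_eq_norm_sq, pow_two,
      inv_mul_cancel_left₀ (norm_ne_zero_iff.2 hv0)]
  have hdiff : ⟪u - z, v⟫ ≤ ε * ‖v‖ :=
    (real_inner_le_norm _ _).trans (mul_le_mul_of_nonneg_right huz (norm_nonneg v))
  rw [inner_sub_left, huv] at hdiff
  linarith [hv z hz]

lemma ContinuousLinearMap.opNorm_le_of_inner_le_on_isCover (T : E →L[ℝ] F) {ε : ℝ≥0}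
    (hε : ε ≤ 1) {N : Set E} (hN : IsCover ε (sphere 0 1) N) {M : Set F}
    (hM : IsCover ε (sphere 0 1) M) {t : ℝ} (ht : 0 ≤ t) (hT : ∀ y ∈ N, ∀ z ∈ M, ⟪z, T y⟫ ≤ t) :
    (1 - ε) ^ 2 * ‖T‖ ≤ t := by
  have hε' : (0 : ℝ) ≤ 1 - ε := sub_nonneg.2 (by exact_mod_cast hε)
  have := ((1 - ε : ℝ) • T).opNorm_le_of_isCover_sphere hN ht fun y hy => by
    rw [smul_apply, norm_smul, Real.norm_of_nonneg hε']
    exact norm_le_of_isCover_sphere hM ht (hT y hy)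
  rwa [norm_smul, Real.norm_of_nonneg hε', ← mul_assoc, ← pow_two] at this

end OpNorm

section Matrix

open scoped Matrix

variable {n : Type*} [Fintype n] [DecidableEq n]

attribute [local instance] Matrix.frobeniusNormedAddCommGroup in
lemma Matrix.norm_toEuclideanCLM_le_sqrt_re_trace_mul_star (M : Matrix n n ℂ) :
    ‖toEuclideanCLM (𝕜 := ℂ) M‖ ≤ √((M * star M).trace.re) := by
  have hfrob : ‖M‖ = √((M * star M).trace.re) := by
    rw [frobenius_norm_def, ← sqrt_eq_rpow]
    congr 1
    simp only [trace, diag_apply, mul_apply, star_apply, RCLike.star_def, RCLike.mul_conj,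
      Complex.re_sum]
    norm_cast
  refine hfrob ▸ ContinuousLinearMap.opNorm_le_bound _ (norm_nonneg M) fun x => ?_
  calc ‖toEuclideanCLM (𝕜 := ℂ) M x‖ = ‖replicateCol Unit (M *ᵥ x.ofLp)‖ := by
        rw [frobenius_norm_replicateCol, ← ofLp_toEuclideanCLM, WithLp.toLp_ofLp]
    _ = ‖M * replicateCol Unit x.ofLp‖ := by rw [replicateCol_mulVec]
    _ ≤ ‖M‖ * ‖replicateCol Unit x.ofLp‖ := frobenius_norm_mul _ _
    _ = ‖M‖ * ‖x‖ := by rw [frobenius_norm_replicateCol, WithLp.toLp_ofLp]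

end Matrix

section OpNormBall

variable {V F : Type*} [NormedAddCommGroup V] [InnerProductSpace ℝ V] [NormedAddCommGroup F]
  [InnerProductSpace ℝ F]

lemma exists_dual_eq_inner_apply (A : V →ₗ[ℝ] F →L[ℝ] F) (hA : ∀ x, ‖A x‖ ≤ ‖x‖) (y z : F) :
    ∃ f : StrongDual ℝ V, ‖f‖ ≤ ‖y‖ * ‖z‖ ∧ ∀ x, f x = ⟪z, A x y⟫ := by
  set L : V →ₗ[ℝ] ℝ := ((innerSL ℝ z).comp (ContinuousLinearMap.apply ℝ F y)).toLinearMap ∘ₗ A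
  have hL : ∀ x, ‖L x‖ ≤ ‖y‖ * ‖z‖ * ‖x‖ := fun x =>
    calc ‖L x‖ = |⟪z, A x y⟫| := rfl
      _ ≤ ‖z‖ * ‖A x y‖ := abs_real_inner_le_norm _ _
      _ ≤ ‖z‖ * (‖x‖ * ‖y‖) := by gcongr; exact (A x).le_of_opNorm_le (hA x) y
      _ = ‖y‖ * ‖z‖ * ‖x‖ := by ring
  exact ⟨L.mkContinuous _ hL, L.mkContinuous_norm_le (by positivity) hL, fun _ => rfl⟩

variable [FiniteDimensional ℝ V] [MeasurableSpace V] [BorelSpace V] [FiniteDimensional ℝ F]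

lemma gaussVolume_one_lt_norm_le (A : V →ₗ[ℝ] F →L[ℝ] F) (hA : ∀ x, ‖A x‖ ≤ ‖x‖) {b : ℝ}
    (hb : 0 < b) :
    gaussVolume b {x | 1 < ‖A x‖} ≤
      ENNReal.ofReal (81 ^ finrank ℝ F * exp (-(81 / 256) * b)) * gaussVolume b (univ : Set V) := by
  obtain ⟨N, hNcard, hNs, hN⟩ := exists_finset_isCover_of_subset_closedBall
    (sphere_subset_closedBall (x := (0 : F)) (ε := 1)) (ε := 1 / 4) (by simp)
  norm_num at hNcard
  choose f hf hfA using exists_dual_eq_inner_apply A hA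
  have hcover : {x | 1 < ‖A x‖} ⊆ ⋃ y ∈ N, ⋃ z ∈ N, {x | 9 / 16 < f y z x} := by
    intro x hx
    by_contra h
    simp only [mem_iUnion, not_exists] at h
    have := (A x).opNorm_le_of_inner_le_on_isCover (ε := 1 / 4) (by simp) hN hN
      (t := 9 / 16) (by norm_num) fun y hy z hz => hfA y z x ▸ not_lt.1 (h y hy z hz)
    norm_num at this
    exact not_lt.2 this hx
  have hnorm : ∀ y ∈ N, ∀ z ∈ N, ‖f y z‖ ≤ 1 := fun y hy z hz => by
    simpa [mem_sphere_zero_iff_norm.1 (hNs hy), mem_sphere_zero_iff_norm.1 (hNs hz)] using hf y z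
  calc gaussVolume b {x | 1 < ‖A x‖}
      ≤ ∑ y ∈ N, ∑ z ∈ N, gaussVolume b {x | 9 / 16 < f y z x} :=
        (measure_mono hcover).trans <| (measure_biUnion_finset_le _ _).trans <|
          Finset.sum_le_sum fun y _ => measure_biUnion_finset_le _ _
    _ ≤ ∑ y ∈ N, ∑ z ∈ N, ENNReal.ofReal (exp (-b * (9 / 16) ^ 2)) * gaussVolume b univ :=
        Finset.sum_le_sum fun y hy => Finset.sum_le_sum fun z hz =>
          gaussVolume_setOf_lt_le hb _ (hnorm y hy z hz) (by norm_num)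
    _ = ENNReal.ofReal ((N.card : ℝ) ^ 2 * exp (-(81 / 256) * b)) * gaussVolume b univ := by
        simp only [Finset.sum_const, nsmul_eq_mul]
        rw [ENNReal.ofReal_mul (by positivity), ENNReal.ofReal_pow (Nat.cast_nonneg _),
          ENNReal.ofReal_natCast, show -b * (9 / 16) ^ 2 = -(81 / 256) * b by ring]
        ring
    _ ≤ _ := by
        gcongr
        calc (N.card : ℝ) ^ 2 ≤ ((9 : ℝ) ^ finrank ℝ F) ^ 2 := by gcongr
          _ = 81 ^ finrank ℝ F := by rw [← pow_mul, mul_comm, pow_mul]; norm_num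

lemma gaussVolume_univ_le_two_mul (A : V →ₗ[ℝ] F →L[ℝ] F) (hA : ∀ x, ‖A x‖ ≤ ‖x‖) {b : ℝ}
    (hb : 0 < b) (hbF : 81 ^ finrank ℝ F * exp (-(81 / 256) * b) ≤ 1 / 2) :
    gaussVolume b (univ : Set V) ≤ 2 * gaussVolume b {x | ‖A x‖ ≤ 1} := by
  set G := gaussVolume b (univ : Set V)
  have hG : 2⁻¹ * G ≠ ⊤ := ENNReal.mul_ne_top (by simp) (by simp [G, gaussVolume_univ hb])
  have hcompl : gaussVolume b {x | ‖A x‖ ≤ 1}ᶜ ≤ 2⁻¹ * G := by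
    simp only [compl_ofPred, not_le]
    refine (gaussVolume_one_lt_norm_le A hA hb).trans (mul_le_mul_left ?_ _)
    simpa using ENNReal.ofReal_le_ofReal hbF
  calc G = 2 * (2⁻¹ * G) := by
        rw [← mul_assoc, ENNReal.mul_inv_cancel two_ne_zero ENNReal.ofNat_ne_top, one_mul]
    _ ≤ 2 * gaussVolume b {x | ‖A x‖ ≤ 1} := by
        gcongr
        refine ENNReal.le_of_add_le_add_right hG ?_
        calc 2⁻¹ * G + 2⁻¹ * G = G := by rw [← add_mul, ENNReal.inv_two_add_inv_two, one_mul]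
          _ ≤ _ := measure_univ_le_add_compl {x | ‖A x‖ ≤ 1}
          _ ≤ _ := by gcongr

theorem volume_ball_le_mul_volume_norm_le (A : V →ₗ[ℝ] F →L[ℝ] F) (hA : ∀ x, ‖A x‖ ≤ ‖x‖)
    {b : ℝ} (hb : 0 < b) (hbF : 81 ^ finrank ℝ F * exp (-(81 / 256) * b) ≤ 1 / 2) (R : ℝ) :
    volume (ball (0 : V) R) ≤ ENNReal.ofReal (2 * exp (b * R ^ 2)) * volume {x | ‖A x‖ ≤ 1} :=
  calc volume (ball (0 : V) R)
      ≤ ENNReal.ofReal (exp (b * R ^ 2)) * gaussVolume b univ :=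
        volume_ball_le_exp_mul_gaussVolume hb.le R
    _ ≤ ENNReal.ofReal (exp (b * R ^ 2)) * (2 * volume {x | ‖A x‖ ≤ 1}) := by
        gcongr
        exact (gaussVolume_univ_le_two_mul A hA hb hbF).trans
          (mul_le_mul_right (gaussVolume_le_volume hb.le _) 2)
    _ = _ := by rw [ENNReal.ofReal_mul zero_le_two, ENNReal.ofReal_ofNat]; ring

end OpNormBall

lemma eighty_one_pow_mul_exp_le_half {d : ℕ} (hd : 0 < d) :
    (81 : ℝ) ^ (2 * d) * exp (-(81 / 256) * (32 * d)) ≤ 1 / 2 := by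
  have he : (13122 : ℝ) ≤ exp (81 / 8) :=
    calc (13122 : ℝ) ≤ 2.7 ^ 10 := by norm_num
      _ ≤ exp 1 ^ 10 := by gcongr; exact (lt_trans (by norm_num) exp_one_gt_d9).le
      _ = exp 10 := by rw [← exp_nat_mul]; norm_num
      _ ≤ exp (81 / 8) := exp_le_exp.2 (by norm_num)
  calc (81 : ℝ) ^ (2 * d) * exp (-(81 / 256) * (32 * d)) = (6561 * exp (-(81 / 8))) ^ d := by
        rw [mul_pow, ← exp_nat_mul, pow_mul]; ring_nf
    _ ≤ (1 / 2) ^ d := by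
        gcongr
        rw [exp_neg, ← div_eq_mul_inv, div_le_iff₀ (exp_pos _)]
        linarith
    _ ≤ 1 / 2 := pow_le_of_le_one (by norm_num) (by norm_num) hd.ne'

lemma two_mul_exp_neg_le_one {x : ℝ} (hx : 1 ≤ x) : 2 * exp (-x) ≤ 1 := by
  have : 2 ≤ exp x := by linarith [add_one_le_exp x]
  rw [exp_neg, ← div_eq_mul_inv, div_le_one (exp_pos x)]
  exact this

/-- lower volume estimate from the Addendum, via Raymond's
asymptotics: there is `ζ ∈ (0,1)` such that for every `d ≥ 1` the volume of
the operator-norm unit ball of the skew-Hermitian `d×d` matrices (computed in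
the real inner product `⟨x,y⟩ = Re Tr(x y*)`, expressed here through any
isometric parametrization `e` by `ℝ^{d²}`) is at least `ζ^{d²}·Θ_d`, where
`Θ_d` is the volume of the Euclidean ball of radius `√d` in `ℝ^{d²}`. -/
theorem stmt_15 :
    ∃ ζ : ℝ, 0 < ζ ∧ ζ < 1 ∧ ∀ d : ℕ, 0 < d →
      ∀ e : EuclideanSpace ℝ (Fin (d ^ 2)) →ₗ[ℝ] Matrix (Fin d) (Fin d) ℂ,
        (∀ v, star (e v) = -(e v)) →
        (∀ v w, (inner ℝ v w : ℝ) = ((e v * star (e w)).trace).re) →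
        ENNReal.ofReal (ζ ^ (d ^ 2)) *
            volume (Metric.ball (0 : EuclideanSpace ℝ (Fin (d ^ 2)))
              (Real.sqrt d)) ≤
          volume (e ⁻¹' {x : Matrix (Fin d) (Fin d) ℂ | opN x ≤ 1}) := by
  refine ⟨exp (-33), exp_pos _, exp_lt_one_iff.2 (by norm_num), fun d hd e _ he => ?_⟩
  let F := EuclideanSpace ℂ (Fin d)
  let A : EuclideanSpace ℝ (Fin (d ^ 2)) →ₗ[ℝ] F →L[ℝ] F :=
    (ContinuousLinearMap.restrictScalarsₗ ℂ F F ℝ ℝ ∘ₗ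
      (Matrix.toEuclideanCLM (n := Fin d) (𝕜 := ℂ)).toAlgEquiv.toLinearMap.restrictScalars ℝ) ∘ₗ e
  have hA : ∀ x, ‖A x‖ ≤ ‖x‖ := fun x => by
    simpa [A, ← he x x, real_inner_self_eq_norm_sq] using
      (e x).norm_toEuclideanCLM_le_sqrt_re_trace_mul_star
  have hbF : (81 : ℝ) ^ finrank ℝ F * exp (-(81 / 256) * (32 * d)) ≤ 1 / 2 := by
    rw [finrank_real_of_complex, finrank_euclideanSpace_fin]
    exact eighty_one_pow_mul_exp_le_half hd
  have hball := volume_ball_le_mul_volume_norm_le A hA (by positivity) hbF √d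
  have hK : e ⁻¹' {x | opN x ≤ 1} = {x | ‖A x‖ ≤ 1} := rfl
  rw [hK]
  calc ENNReal.ofReal (exp (-33) ^ (d ^ 2)) *
        volume (ball (0 : EuclideanSpace ℝ (Fin (d ^ 2))) √d)
      ≤ ENNReal.ofReal (exp (-33) ^ (d ^ 2)) * (ENNReal.ofReal (2 * exp (32 * d * √d ^ 2)) *
          volume {x | ‖A x‖ ≤ 1}) := mul_le_mul_right hball _
    _ = ENNReal.ofReal (2 * exp (-(d ^ 2 : ℕ))) * volume {x | ‖A x‖ ≤ 1} := by
        rw [← mul_assoc, ← ENNReal.ofReal_mul (by positivity), ← exp_nat_mul, mul_left_comm,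
          ← exp_add, sq_sqrt (Nat.cast_nonneg d)]
        push_cast; ring_nf
    _ ≤ volume {x | ‖A x‖ ≤ 1} := mul_le_of_le_one_left zero_le <|
        ENNReal.ofReal_le_one.2 (two_mul_exp_neg_le_one (by exact_mod_cast Nat.one_le_pow _ _ hd))
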